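/- arXiv:1508.01646 — 2 statements merged into one kernel-verified Lean document; each statement's English description precedes it below -/
import Mathlib

section
/- Let w be a submultiplicative weight and α, β > 0. There exists a constant C = C(α, β, w) > 0 such that for all g, γ ∈ W_H(L^∞, L^1_w), the operator-valued functions G_n(x) = Σ_{k∈ℤ^d} T_{αk}γ(x) ⊙ T_{αk + n/β} g(x) satisfy Σ_{n∈ℤ^d} ‖G_n‖_{L^∞(ℝ^d, B(H))} · w(n/β) ≤ C · ‖g‖_{W_H(L^∞,L^1_w)} · ‖γ‖_{W_H(L^∞,L^1_w)}. -/
open MeasureTheory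
open scoped ENNReal

/-- The rank-one operator `x ⊙ y : H → H`, `(x ⊙ y)(z) = ⟨z, y⟩ x`. -/
noncomputable def odot {H : Type*} [NormedAddCommGroup H] [InnerProductSpace ℂ H]
    (x y : H) : H →L[ℂ] H :=
  (ContinuousLinearMap.toSpanSingleton ℂ x).comp (innerSL ℂ y)

noncomputable def lqNorm {ι : Type*} (q : ℝ≥0∞) (a : ι → ℝ≥0∞) : ℝ≥0∞ :=
  if q = ∞ then ⨆ k, a k else (∑' k, a k ^ q.toReal) ^ (1 / q.toReal)

def cube {d : ℕ} (α : ℝ) (k : Fin d → ℤ) : Set (Fin d → ℝ) :=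
  {x | ∀ i, α * k i ≤ x i ∧ x i < α * k i + α}

/-- The norm of the weighted amalgam space `W_H(L^p, L^q_v)`. -/
noncomputable def amalgamNorm {d : ℕ} {H : Type*} [NormedAddCommGroup H] (α : ℝ)
    (p q : ℝ≥0∞) (v : (Fin d → ℝ) → ℝ) (f : (Fin d → ℝ) → H) : ℝ≥0∞ :=
  lqNorm q (fun k : Fin d → ℤ =>
    eLpNorm ((cube α k).indicator f) p volume * ENNReal.ofReal (v (fun i => α * k i)))

/-!
For almost every `x`, the points `x - αk` and `x - αk - n/β` lie in cubes whose indices `m - k`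
and `p - k` differ by a fixed `t = m - p` with `‖n/β - αt‖_∞ < α`. Hence `‖G_n(x)‖` is bounded by
the correlation `∑_j b_γ(j) b_g(j - t)` of the sequences `b_f(j) = ‖f · χ_{cube j}‖_∞`. Writing
`n/β = (n/β - αt) + αj - α(j - t)`, symmetry and submultiplicativity give
`w(n/β) ≤ M w(αj) w(α(j - t))` with `M = max_{‖u‖_∞ ≤ α} w(u)`, and every `t` is attained by at most
`⌈2αβ⌉^d` indices `n`. Summing over `n` gives `C = M ⌈2αβ⌉^d`.
-/

lemma enorm_odot_le {H : Type*} [NormedAddCommGroup H] [InnerProductSpace ℂ H] (x y : H) :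
    ‖odot x y‖ₑ ≤ ‖x‖ₑ * ‖y‖ₑ := by
  have h : ‖odot x y‖ ≤ ‖x‖ * ‖y‖ := by
    refine (ContinuousLinearMap.opNorm_comp_le _ _).trans ?_
    rw [ContinuousLinearMap.norm_toSpanSingleton, innerSL_apply_norm]
  simp only [enorm_eq_nnnorm, ← ENNReal.coe_mul, ENNReal.coe_le_coe]
  exact_mod_cast h

lemma lqNorm_one {ι : Type*} (a : ι → ℝ≥0∞) : lqNorm 1 a = ∑' k, a k := by
  simp [lqNorm]

lemma ENNReal.tsum_tsum_mul_sub {ι : Type*} [AddGroup ι] (a b : ι → ℝ≥0∞) :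
    ∑' t, ∑' j, a j * b (j - t) = (∑' j, a j) * ∑' k, b k := by
  rw [ENNReal.tsum_comm, ← ENNReal.tsum_mul_right]
  refine tsum_congr fun j => ?_
  rw [ENNReal.tsum_mul_left]
  congr 1
  exact (Equiv.subLeft j).tsum_eq b

lemma weight_add_sub_le {E : Type*} [AddCommGroup E] {w : E → ℝ} (hw_pos : ∀ x, 0 < w x)
    (hw_symm : ∀ x, w (-x) = w x) (hw_submul : ∀ x y, w (x + y) ≤ w x * w y) (u x y : E) :
    w (u + (x - y)) ≤ w u * w x * w y := by
  calc w (u + (x - y)) ≤ w u * w (x + -y) := sub_eq_add_neg x y ▸ hw_submul u _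
    _ ≤ w u * (w x * w y) :=
      mul_le_mul_of_nonneg_left (hw_symm y ▸ hw_submul x (-y)) (hw_pos u).le
    _ = w u * w x * w y := (mul_assoc _ _ _).symm

lemma ae_enorm_le_eLpNorm_indicator {X E ι : Type*} [MeasurableSpace X] {μ : Measure X}
    [NormedAddCommGroup E] [Countable ι] (s : ι → Set X) (f : X → E) :
    ∀ᵐ y ∂μ, ∀ k, y ∈ s k → ‖f y‖ₑ ≤ eLpNorm ((s k).indicator f) ∞ μ := by
  refine ae_all_iff.2 fun k => ?_
  filter_upwards [ae_le_eLpNormEssSup (f := (s k).indicator f) (μ := μ)] with y hy hyk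
  rwa [eLpNorm_exponent_top, ← Set.indicator_of_mem hyk f]

lemma ae_forall_sub {G ι : Type*} [AddGroup G] [MeasurableSpace G] [MeasurableAdd G]
    {μ : Measure G} [μ.IsAddRightInvariant] [Countable ι] {P : G → Prop}
    (h : ∀ᵐ y ∂μ, P y) (c : ι → G) : ∀ᵐ x ∂μ, ∀ k, P (x - c k) :=
  ae_all_iff.2 fun k => (measurePreserving_sub_right μ (c k)).quasiMeasurePreserving.ae h

lemma card_Ioc_floor_le (a b : ℝ) : (Finset.Ioc ⌊a⌋ ⌊b⌋).card ≤ ⌈b - a⌉₊ := by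
  have hlt : ((⌊b⌋ - ⌊a⌋ : ℤ) : ℝ) < ⌈b - a⌉₊ + 1 := by
    push_cast
    linarith [Int.floor_le b, Int.lt_floor_add_one a, Nat.le_ceil (b - a)]
  have : ⌊b⌋ - ⌊a⌋ < (⌈b - a⌉₊ : ℤ) + 1 := by exact_mod_cast hlt
  rw [Int.card_Ioc]
  omega

section Lattice

variable {d : ℕ} {α : ℝ}

lemma mem_cube_floor (hα : 0 < α) (x : Fin d → ℝ) : x ∈ cube α (fun i => ⌊x i / α⌋) := by
  intro i
  have h₁ := Int.floor_le (x i / α)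
  have h₂ := Int.lt_floor_add_one (x i / α)
  constructor
  · rwa [le_div_iff₀ hα, mul_comm] at h₁
  · rwa [div_lt_iff₀ hα, add_mul, one_mul, mul_comm] at h₂

lemma sub_mem_cube {x : Fin d → ℝ} {m : Fin d → ℤ} (hx : x ∈ cube α m) (k : Fin d → ℤ) :
    x - (fun i => α * k i) ∈ cube α (m - k) := by
  intro i
  simp only [Pi.sub_apply, Int.cast_sub]
  constructor <;> linarith [hx i]

lemma dist_sub_lt_of_mem_cube (hα : 0 < α) {x y : Fin d → ℝ} {m p : Fin d → ℤ}
    (hx : x ∈ cube α m) (hy : y ∈ cube α p) :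
    dist (x - y) (fun i => α * (m - p) i) < α := by
  rw [dist_pi_lt_iff hα]
  intro i
  rw [Real.dist_eq, abs_lt]
  simp only [Pi.sub_apply, Int.cast_sub]
  constructor <;> linarith [hx i, hy i]

lemma encard_setOf_dist_lt_le (hα : 0 < α) {β : ℝ} (hβ : 0 < β) (t : Fin d → ℤ) :
    {n : Fin d → ℤ | dist (fun i => n i / β) (fun i => α * t i) < α}.encard ≤
      (⌈2 * α * β⌉₊ ^ d : ℕ) := by
  set box := Fintype.piFinset fun i => Finset.Ioc ⌊β * (α * t i - α)⌋ ⌊β * (α * t i + α)⌋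
  have hsub : {n : Fin d → ℤ | dist (fun i => n i / β) (fun i => α * t i) < α} ⊆ box := by
    intro n hn
    simp only [Set.mem_ofPred_eq, dist_pi_lt_iff hα, Real.dist_eq, abs_lt] at hn
    simp only [box, Finset.mem_coe, Fintype.mem_piFinset, Finset.mem_Ioc]
    intro i
    obtain ⟨hlo, hhi⟩ := hn i
    rw [lt_sub_iff_add_lt, lt_div_iff₀ hβ] at hlo
    rw [sub_lt_iff_lt_add, div_lt_iff₀ hβ] at hhi
    exact ⟨Int.floor_lt.2 (by linarith), Int.le_floor.2 (by linarith)⟩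
  have hcard : box.card ≤ ⌈2 * α * β⌉₊ ^ d := by
    rw [Fintype.card_piFinset, ← Fin.prod_const]
    refine Finset.prod_le_prod' fun i _ => (card_Ioc_floor_le _ _).trans_eq ?_
    congr 1
    ring
  calc _ ≤ (box : Set (Fin d → ℤ)).encard := Set.encard_le_encard hsub
    _ ≤ _ := by rw [Set.encard_coe_eq_coe_finsetCard]; exact_mod_cast hcard

end Lattice

lemma enorm_tsum_odot_le {H ι : Type*} [NormedAddCommGroup H] [InnerProductSpace ℂ H]
    [AddCommGroup ι] {F G : ι → H} {a b : ι → ℝ≥0∞} {m p : ι}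
    (hF : ∀ k, ‖F k‖ₑ ≤ a (m - k)) (hG : ∀ k, ‖G k‖ₑ ≤ b (p - k)) :
    ‖∑' k, odot (F k) (G k)‖ₑ ≤ ∑' j, a j * b (j - (m - p)) := by
  calc ‖∑' k, odot (F k) (G k)‖ₑ ≤ ∑' k, a (m - k) * b (p - k) :=
        (enorm_tsum_le_tsum_enorm (f := fun k => odot (F k) (G k))).trans <|
          ENNReal.tsum_le_tsum fun k =>
            (enorm_odot_le _ _).trans (mul_le_mul' (hF k) (hG k))
    _ = ∑' j, a j * b (j - (m - p)) := by
        rw [← (Equiv.subLeft m).tsum_eq]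
        refine tsum_congr fun j => ?_
        rw [Equiv.subLeft_apply, sub_sub_cancel]
        congr 2
        abel

lemma essSup_enorm_tsum_odot_le {d : ℕ} {H : Type*} [NormedAddCommGroup H]
    [InnerProductSpace ℂ H] {α : ℝ} (hα : 0 < α) (g γ : (Fin d → ℝ) → H) (v : Fin d → ℝ) :
    essSup (fun x => ‖∑' k : Fin d → ℤ,
        odot (γ (x - fun i => α * k i)) (g (x - (fun i => α * k i) - v))‖ₑ) volume ≤
      ∑' t, {t : Fin d → ℤ | dist v (fun i => α * t i) < α}.indicator
        (fun t => ∑' j, eLpNorm ((cube α j).indicator γ) ∞ volume *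
          eLpNorm ((cube α (j - t)).indicator g) ∞ volume) t := by
  refine essSup_le_of_ae_le _ ?_
  filter_upwards [ae_forall_sub (ae_enorm_le_eLpNorm_indicator (cube α) γ)
      fun k : Fin d → ℤ => fun i => α * k i,
    ae_forall_sub (ae_enorm_le_eLpNorm_indicator (cube α) g)
      fun k : Fin d → ℤ => (fun i => α * k i) + v] with x hγ hg
  have hx := mem_cube_floor hα x
  have hxv := mem_cube_floor hα (x - v)
  set m : Fin d → ℤ := fun i => ⌊x i / α⌋
  set p : Fin d → ℤ := fun i => ⌊(x - v) i / α⌋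
  have hnear : m - p ∈ {t : Fin d → ℤ | dist v (fun i => α * t i) < α} := by
    simpa using dist_sub_lt_of_mem_cube hα hx hxv
  refine (enorm_tsum_odot_le (m := m) (p := p)
    (a := fun j => eLpNorm ((cube α j).indicator γ) ∞ volume)
    (b := fun j => eLpNorm ((cube α j).indicator g) ∞ volume) (fun k => hγ k _ (sub_mem_cube hx k))
    fun k => ?_).trans ?_
  · rw [sub_sub]
    refine hg k _ ?_
    rw [← sub_sub, sub_right_comm]
    exact sub_mem_cube hxv k
  · exact (Set.indicator_of_mem hnear _).symm.le.trans (ENNReal.le_tsum _)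

lemma ofReal_weight_le_of_dist_lt {d : ℕ} {w : (Fin d → ℝ) → ℝ} (hw_pos : ∀ x, 0 < w x)
    (hw_symm : ∀ x, w (-x) = w x) (hw_submul : ∀ x y, w (x + y) ≤ w x * w y) {α M : ℝ}
    (hM : ∀ x ∈ Metric.closedBall 0 α, w x ≤ M) {v : Fin d → ℝ} {t : Fin d → ℤ}
    (hvt : dist v (fun i => α * t i) < α) (j : Fin d → ℤ) :
    ENNReal.ofReal (w v) ≤ ENNReal.ofReal M * ENNReal.ofReal (w fun i => α * j i) *
      ENNReal.ofReal (w fun i => α * (j - t) i) := by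
  have hdecomp : v = (v - fun i => α * t i) + ((fun i => α * j i) - fun i => α * (j - t) i) := by
    ext i
    simp only [Pi.add_apply, Pi.sub_apply, Int.cast_sub]
    ring
  have hu : (v - fun i => α * t i) ∈ Metric.closedBall 0 α := by
    rw [mem_closedBall_zero_iff, ← dist_eq_norm]
    exact hvt.le
  have hwv := weight_add_sub_le hw_pos hw_symm hw_submul
    (v - fun i => α * t i) (fun i => α * j i) (fun i => α * (j - t) i)
  rw [← hdecomp] at hwv
  have hM0 : 0 ≤ M := (hw_pos _).le.trans (hM _ hu)
  rw [← ENNReal.ofReal_mul hM0, ← ENNReal.ofReal_mul (mul_nonneg hM0 (hw_pos _).le)]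
  exact ENNReal.ofReal_le_ofReal <| hwv.trans <| mul_le_mul_of_nonneg_right
    (mul_le_mul_of_nonneg_right (hM _ hu) (hw_pos _).le) (hw_pos _).le

lemma tsum_indicator_correlation_mul_le {ι κ : Type*} [AddGroup ι] (S : κ → Set ι)
    (a b u : ι → ℝ≥0∞) (ω : κ → ℝ≥0∞) {M K : ℝ≥0∞}
    (hω : ∀ n, ∀ t ∈ S n, ∀ j, ω n ≤ M * u j * u (j - t))
    (hK : ∀ t, ({n | t ∈ S n}.encard : ℝ≥0∞) ≤ K) :
    ∑' n, (∑' t, (S n).indicator (fun t => ∑' j, a j * b (j - t)) t) * ω n ≤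
      M * K * ((∑' j, a j * u j) * ∑' k, b k * u k) := by
  let X : ι → ℝ≥0∞ := fun t => M * ∑' j, a j * u j * (b (j - t) * u (j - t))
  have hterm : ∀ n t, (S n).indicator (fun t => ∑' j, a j * b (j - t)) t * ω n ≤
      (S n).indicator 1 t * X t := by
    intro n t
    by_cases ht : t ∈ S n
    · simp only [X, Set.indicator_of_mem ht, Pi.one_apply, one_mul]
      rw [← ENNReal.tsum_mul_right, ← ENNReal.tsum_mul_left]
      refine ENNReal.tsum_le_tsum fun j => ?_
      calc a j * b (j - t) * ω n ≤ a j * b (j - t) * (M * u j * u (j - t)) := by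
            gcongr; exact hω n t ht j
        _ = M * (a j * u j * (b (j - t) * u (j - t))) := by ring
    · simp [ht]
  have hcount : ∀ t, ∑' n, (S n).indicator 1 t = ({n | t ∈ S n}.encard : ℝ≥0∞) := by
    intro t
    rw [← ENNReal.tsum_set_one, tsum_subtype _ fun _ => (1 : ℝ≥0∞)]
    rfl
  calc ∑' n, (∑' t, (S n).indicator (fun t => ∑' j, a j * b (j - t)) t) * ω n
      ≤ ∑' n, ∑' t, (S n).indicator 1 t * X t := by
        simp_rw [← ENNReal.tsum_mul_right]
        exact ENNReal.tsum_le_tsum fun n => ENNReal.tsum_le_tsum (hterm n)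
    _ = ∑' t, (∑' n, (S n).indicator 1 t) * X t := by
        rw [ENNReal.tsum_comm]
        simp_rw [ENNReal.tsum_mul_right]
    _ ≤ ∑' t, K * X t := ENNReal.tsum_le_tsum fun t => by grw [hcount t, hK t]
    _ = M * K * ((∑' j, a j * u j) * ∑' k, b k * u k) := by
        rw [← ENNReal.tsum_tsum_mul_sub (fun j => a j * u j) (fun k => b k * u k)]
        simp_rw [X, ENNReal.tsum_mul_left]
        ring

theorem walnut_estimate_general {d : ℕ} {H : Type*} [NormedAddCommGroup H] [InnerProductSpace ℂ H]
    (w : (Fin d → ℝ) → ℝ)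
    (hw_cont : Continuous w) (hw_pos : ∀ x, 0 < w x) (hw_symm : ∀ x, w (-x) = w x)
    (hw_submul : ∀ x y, w (x + y) ≤ w x * w y)
    (α β : ℝ) (hα : 0 < α) (hβ : 0 < β) :
    ∃ C : ℝ, 0 < C ∧ ∀ g γ : (Fin d → ℝ) → H,
      amalgamNorm α ∞ 1 w g < ∞ → amalgamNorm α ∞ 1 w γ < ∞ →
      ∑' n : Fin d → ℤ,
          essSup (fun x =>
              (‖∑' k : Fin d → ℤ,
                  odot (γ (x - fun i => α * k i))
                    (g (x - (fun i => α * k i) - fun i => n i / β))‖₊ : ℝ≥0∞)) volume *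
            ENNReal.ofReal (w (fun i => n i / β)) ≤
        ENNReal.ofReal C * amalgamNorm α ∞ 1 w g * amalgamNorm α ∞ 1 w γ := by
  obtain ⟨z, -, hz⟩ := (isCompact_closedBall (0 : Fin d → ℝ) α).exists_isMaxOn
    (Metric.nonempty_closedBall.2 hα.le) hw_cont.continuousOn
  refine ⟨w z * ⌈2 * α * β⌉₊ ^ d, mul_pos (hw_pos z) (by positivity), fun g γ _ _ => ?_⟩
  simp only [amalgamNorm, lqNorm_one]
  calc _ ≤ ∑' n : Fin d → ℤ, (∑' t, {t : Fin d → ℤ | dist (fun i => n i / β)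
          (fun i => α * t i) < α}.indicator (fun t => ∑' j,
            eLpNorm ((cube α j).indicator γ) ∞ volume *
              eLpNorm ((cube α (j - t)).indicator g) ∞ volume) t) *
          ENNReal.ofReal (w fun i => n i / β) :=
        ENNReal.tsum_le_tsum fun n => by gcongr; exact essSup_enorm_tsum_odot_le hα g γ _
    _ ≤ ENNReal.ofReal (w z) * ((⌈2 * α * β⌉₊ ^ d : ℕ) : ℝ≥0∞) *
          ((∑' j, eLpNorm ((cube α j).indicator γ) ∞ volume *
              ENNReal.ofReal (w fun i => α * j i)) *
            ∑' k, eLpNorm ((cube α k).indicator g) ∞ volume *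
              ENNReal.ofReal (w fun i => α * k i)) :=
        tsum_indicator_correlation_mul_le _ _ _ _ _
          (fun _ _ ht => ofReal_weight_le_of_dist_lt hw_pos hw_symm hw_submul hz ht)
          (fun t => ENat.toENNReal_le.2 (encard_setOf_dist_lt_le hα hβ t))
    _ = _ := by
        rw [ENNReal.ofReal_mul (hw_pos z).le, ENNReal.ofReal_pow (by positivity),
          ENNReal.ofReal_natCast]
        push_cast
        ring

/-- Let `w` be a submultiplicative weight and `α, β > 0`. There is a constant `C = C(α,β,w) > 0`
such that for all `g, γ ∈ W_H(L^∞, L^1_w)`, the operator-valued functions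
`G_n(x) = Σ_{k∈ℤ^d} (T_{αk}γ)(x) ⊙ (T_{αk+n/β}g)(x)` satisfy
`Σ_{n∈ℤ^d} ‖G_n‖_{L^∞(ℝ^d,B(H))} w(n/β) ≤ C ‖g‖_{W_H(L^∞,L^1_w)} ‖γ‖_{W_H(L^∞,L^1_w)}`. -/
theorem walnut_estimate {d : ℕ} {H : Type*} [NormedAddCommGroup H] [InnerProductSpace ℂ H]
    [CompleteSpace H] (w : (Fin d → ℝ) → ℝ)
    (hw_cont : Continuous w) (hw_pos : ∀ x, 0 < w x) (hw_symm : ∀ x, w (-x) = w x)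
    (hw_submul : ∀ x y, w (x + y) ≤ w x * w y)
    (α β : ℝ) (hα : 0 < α) (hβ : 0 < β) :
    ∃ C : ℝ, 0 < C ∧ ∀ g γ : (Fin d → ℝ) → H,
      amalgamNorm α ∞ 1 w g < ∞ → amalgamNorm α ∞ 1 w γ < ∞ →
      ∑' n : Fin d → ℤ,
          essSup (fun x =>
              (‖∑' k : Fin d → ℤ,
                  odot (γ (x - fun i => α * k i))
                    (g (x - (fun i => α * k i) - fun i => n i / β))‖₊ : ℝ≥0∞)) volume *
            ENNReal.ofReal (w (fun i => n i / β)) ≤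
        ENNReal.ofReal C * amalgamNorm α ∞ 1 w g * amalgamNorm α ∞ 1 w γ :=
  walnut_estimate_general w hw_cont hw_pos hw_symm hw_submul α β hα hβ
end

section
/- Let g ∈ W_H(C₀, L^1_w) be a continuous window with G(g,α,β) a frame for L^2(ℝ^d,H). Then the frame operator S_g maps W_H(C₀, L^1_w) into itself: if f ∈ W_H(L^∞, L^1_w) is continuous, then S_g f = β^{-d} Σ_{n∈ℤ^d} G_n(T_{n/β} f) is continuous, where G_n(x) = Σ_k T_{αk}g(x) ⊙ T_{αk+n/β}g(x). In particular, the series Σ_n G_n(T_{n/β}f) converges uniformly on ℝ^d. -/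
/-!
On the cube `α (k + [0,1)^d)` a continuous function is bounded by its `L^∞` norm there, so
`‖g x‖ ≤ a k` and `‖f x‖ ≤ b k` with summable `a, b` (because `w ≥ 1`). Writing `p, p'` for the
cube indices of `x` and `x - n/β`, this gives `‖G_n(x)‖ ≤ ∑ₖ a (p - k) a (p' - k)`, the
autocorrelation of `a` at `p' - p`. Now `p' - p` is `-⌈n/(αβ)⌉` up to an element of `{0,1}^d`, and
`n ↦ ⌈n/(αβ)⌉` is at most `⌈αβ⌉^d`-to-one, so `sup_x ‖G_n(x)‖` is summable in `n` (Walnut's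
estimate). The Weierstrass M-test gives the uniform convergence; each `G_n` is continuous because
its `k`-series converges locally uniformly, only finitely many cubes being close to a given point.
-/

open MeasureTheory
open scoped ENNReal

/-- The time-frequency shift `M_{βn}T_{αk} g (t) = e^{2πi⟨βn,t⟩} g(t − αk)`. -/
noncomputable def tfShift {d : ℕ} {H : Type*} [NormedAddCommGroup H] [NormedSpace ℂ H]
    (α β : ℝ) (g : (Fin d → ℝ) → H) (k n : Fin d → ℤ) : (Fin d → ℝ) → H :=
  fun t => Complex.exp (2 * (Real.pi : ℂ) * Complex.I * ((∑ i, β * n i * t i : ℝ) : ℂ)) •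
    g (t - fun i => α * k i)

open Topology
open scoped Finset

section RankOne

variable {H : Type*} [NormedAddCommGroup H] [InnerProductSpace ℂ H]

lemma norm_odot_le (x y : H) : ‖odot x y‖ ≤ ‖x‖ * ‖y‖ :=
  (ContinuousLinearMap.opNorm_comp_le _ _).trans_eq <| by
    rw [ContinuousLinearMap.norm_toSpanSingleton, innerSL_apply_norm]

lemma continuous_odot : Continuous fun p : H × H => odot p.1 p.2 :=
  ((ContinuousLinearMap.smulRightL ℂ H H).continuous.comp
    ((innerSL ℂ).continuous.comp continuous_snd)).clm_apply continuous_fst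

end RankOne

lemma Int.floor_sub_sub_floor_add_ceil_mem {R : Type*} [Field R] [LinearOrder R]
    [IsStrictOrderedRing R] [FloorRing R] (u t : R) :
    ⌊u - t⌋ - ⌊u⌋ + ⌈t⌉ ∈ ({0, 1} : Finset ℤ) := by
  have hlow : ⌊u⌋ - ⌈t⌉ ≤ ⌊u - t⌋ :=
    Int.le_floor.2 (by push_cast; linarith [Int.floor_le u, Int.le_ceil t])
  have hhigh : ⌊u - t⌋ < ⌊u⌋ - ⌈t⌉ + 2 :=
    Int.floor_lt.2 (by push_cast; linarith [Int.lt_floor_add_one u, Int.ceil_lt_add_one t])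
  simp only [Finset.mem_insert, Finset.mem_singleton]
  omega

section LatticeCubes

variable {d : ℕ} {α : ℝ}

noncomputable def latticeIndex (α : ℝ) (x : Fin d → ℝ) : Fin d → ℤ := fun i => ⌊x i / α⌋

lemma mem_cube_latticeIndex (hα : 0 < α) (x : Fin d → ℝ) : x ∈ cube α (latticeIndex α x) := by
  intro i
  have h1 : (⌊x i / α⌋ : ℝ) * α ≤ x i := (le_div_iff₀ hα).1 (Int.floor_le _)
  have h2 : x i < (⌊x i / α⌋ + 1) * α := (div_lt_iff₀ hα).1 (Int.lt_floor_add_one _)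
  simp only [latticeIndex]
  constructor <;> linarith

lemma latticeIndex_sub_lattice (hα : α ≠ 0) (x : Fin d → ℝ) (k : Fin d → ℤ) :
    latticeIndex α (x - fun i => α * k i) = latticeIndex α x - k := by
  funext i
  simp only [latticeIndex, Pi.sub_apply, sub_div, mul_div_cancel_left₀ _ hα, Int.floor_sub_intCast]

lemma latticeIndex_sub_sub_add_ceil_mem (x v : Fin d → ℝ) :
    latticeIndex α (x - v) - latticeIndex α x + (fun i => ⌈v i / α⌉) ∈
      Fintype.piFinset fun _ => ({0, 1} : Finset ℤ) := by
  rw [Fintype.mem_piFinset]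
  intro i
  simpa only [latticeIndex, Pi.add_apply, Pi.sub_apply, sub_div] using
    Int.floor_sub_sub_floor_add_ceil_mem (x i / α) (v i / α)

lemma latticeIndex_mem_of_mem_ball (hα : 0 < α) {x₀ x : Fin d → ℝ}
    (hx : x ∈ Metric.ball x₀ 1) :
    latticeIndex α x ∈
      Fintype.piFinset fun i => Finset.Icc ⌊(x₀ i - 1) / α⌋ ⌊(x₀ i + 1) / α⌋ := by
  rw [Fintype.mem_piFinset]
  intro i
  have hxi : |x i - x₀ i| < 1 :=
    (dist_le_pi_dist x x₀ i).trans_lt (Metric.mem_ball.1 hx)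
  rw [abs_lt] at hxi
  exact Finset.mem_Icc.2
    ⟨Int.floor_mono (div_le_div_of_nonneg_right (by linarith) hα.le),
      Int.floor_mono (div_le_div_of_nonneg_right (by linarith) hα.le)⟩

lemma volume_ball_inter_cube_pos {k : Fin d → ℤ} {x : Fin d → ℝ}
    (hx : x ∈ cube α k) {ε : ℝ} (hε : 0 < ε) : 0 < volume (Metric.ball x ε ∩ cube α k) := by
  have hcube : cube α k = Set.univ.pi fun i => Set.Ico (α * k i) (α * k i + α) := by
    ext y
    simp [cube, Set.mem_pi]
  rw [hcube, ball_pi x hε, ← Set.pi_inter_distrib, volume_pi_pi, CanonicallyOrderedAdd.prod_pos]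
  intro i _
  obtain ⟨hlow, hhigh⟩ := hx i
  have hsub : Set.Ico (x i) (min (x i + ε) (α * k i + α)) ⊆
      Metric.ball (x i) ε ∩ Set.Ico (α * k i) (α * k i + α) := by
    rintro y ⟨hy₁, hy₂⟩
    rw [lt_min_iff] at hy₂
    rw [Real.ball_eq_Ioo]
    exact ⟨⟨by linarith, hy₂.1⟩, hlow.trans hy₁, hy₂.2⟩
  refine lt_of_lt_of_le ?_ (measure_mono hsub)
  rw [Real.volume_Ico, ENNReal.ofReal_pos, sub_pos, lt_min_iff]
  exact ⟨by linarith, hhigh⟩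

/-- Every point of a cube has neighbourhoods meeting the cube in positive measure, so the
essential supremum cannot miss a value of a continuous function. -/
lemma enorm_le_eLpNorm_indicator_cube {H : Type*} [NormedAddCommGroup H]
    {h : (Fin d → ℝ) → H} (hh : Continuous h) {k : Fin d → ℤ} {x : Fin d → ℝ}
    (hx : x ∈ cube α k) : ‖h x‖ₑ ≤ eLpNorm ((cube α k).indicator h) ∞ volume := by
  rw [eLpNorm_exponent_top]
  by_contra! hlt
  obtain ⟨ε, hε, hball⟩ := Metric.isOpen_iff.1
    (isOpen_lt continuous_const hh.enorm) x hlt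
  have hnull := ae_iff.1 (ENNReal.ae_le_essSup (μ := volume) fun y => ‖(cube α k).indicator h y‖ₑ)
  refine (volume_ball_inter_cube_pos hx hε).ne' (measure_mono_null ?_ hnull)
  rintro y ⟨hy, hyk⟩
  simp only [Set.mem_ofPred_eq, not_le, Set.indicator_of_mem hyk]
  exact hball hy

end LatticeCubes

section Summability

lemma summable_comp_of_card_fiber_le {ι κ : Type*} [DecidableEq κ] {c : κ → ℝ}
    (hc₀ : ∀ m, 0 ≤ c m) (hc : Summable c) {φ : ι → κ} {N : ℕ}
    (hφ : ∀ (s : Finset ι) (m : κ), #{n ∈ s | φ n = m} ≤ N) : Summable (c ∘ φ) := by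
  refine summable_of_sum_le (c := N * ∑' m, c m) (fun n => hc₀ (φ n)) fun s => ?_
  calc ∑ n ∈ s, c (φ n) = ∑ m ∈ s.image φ, #{n ∈ s | φ n = m} • c m := Finset.sum_comp c φ
    _ ≤ ∑ m ∈ s.image φ, N * c m := by
        gcongr with m
        rw [nsmul_eq_mul]
        exact mul_le_mul_of_nonneg_right (by exact_mod_cast hφ s m) (hc₀ m)
    _ ≤ N * ∑' m, c m := by
        rw [← Finset.mul_sum]
        exact mul_le_mul_of_nonneg_left (hc.sum_le_tsum _ fun m _ => hc₀ m) (Nat.cast_nonneg N)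

/-- The integers `n` with `⌈n / r⌉ = m` form the half-open interval `((m - 1) r, m r]`. -/
lemma card_filter_ceil_div_eq_le {d : ℕ} {r : ℝ} (hr : 0 < r) (s : Finset (Fin d → ℤ))
    (m : Fin d → ℤ) : #{n ∈ s | (fun i => ⌈(n i : ℝ) / r⌉) = m} ≤ ⌈r⌉.toNat ^ d := by
  have hsub : {n ∈ s | (fun i => ⌈(n i : ℝ) / r⌉) = m} ⊆
      Fintype.piFinset fun i => Finset.Ioc ⌊(m i - 1) * r⌋ ⌊m i * r⌋ := by
    intro n hn
    rw [Fintype.mem_piFinset]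
    intro i
    have hni : ⌈(n i : ℝ) / r⌉ = m i := congrFun (Finset.mem_filter.1 hn).2 i
    have hlow : ((m i : ℝ) - 1) * r < n i := by
      have := Int.ceil_lt_add_one ((n i : ℝ) / r)
      rw [hni] at this
      exact (lt_div_iff₀ hr).1 (by linarith)
    have hhigh : (n i : ℝ) ≤ m i * r := (div_le_iff₀ hr).1 (hni ▸ Int.le_ceil _)
    exact Finset.mem_Ioc.2 ⟨Int.floor_lt.2 (by exact_mod_cast hlow), Int.le_floor.2 hhigh⟩
  have hcard : ∀ t : ℝ, (⌊t⌋ - ⌊t - r⌋).toNat ≤ ⌈r⌉.toNat := fun t => by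
    have : ⌊t⌋ < ⌊t - r⌋ + ⌈r⌉ + 1 :=
      Int.floor_lt.2 (by push_cast; linarith [Int.lt_floor_add_one (t - r), Int.le_ceil r])
    omega
  calc #{n ∈ s | (fun i => ⌈(n i : ℝ) / r⌉) = m}
      ≤ ∏ i, (⌊m i * r⌋ - ⌊(m i - 1) * r⌋).toNat := by
        simpa only [Fintype.card_piFinset, Int.card_Ioc] using Finset.card_le_card hsub
    _ ≤ ∏ _i : Fin d, ⌈r⌉.toNat := by
        gcongr with i
        simpa only [sub_one_mul] using hcard (m i * r)
    _ = ⌈r⌉.toNat ^ d := by rw [Finset.prod_const, Finset.card_univ, Fintype.card_fin]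

noncomputable def autocorr {ι : Type*} [Add ι] (a : ι → ℝ) (q : ι) : ℝ := ∑' j, a j * a (j + q)

variable {ι : Type*} [AddCommGroup ι] {a : ι → ℝ}

lemma autocorr_nonneg (ha₀ : ∀ k, 0 ≤ a k) (q : ι) : 0 ≤ autocorr a q :=
  tsum_nonneg fun _ => mul_nonneg (ha₀ _) (ha₀ _)

lemma summable_mul_sub_mul_sub (ha₀ : ∀ k, 0 ≤ a k) (ha : Summable a) (p p' : ι) :
    Summable fun k => a (p - k) * a (p' - k) :=
  (ha.mul_of_nonneg ha ha₀ ha₀).comp_injective (i := fun k => (p - k, p' - k))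
    fun _ _ h => sub_right_injective (congrArg Prod.fst h :)

lemma tsum_mul_sub_mul_sub (p p' : ι) :
    ∑' k, a (p - k) * a (p' - k) = autocorr a (p' - p) := by
  rw [autocorr, ← (Equiv.subLeft p).tsum_eq]
  congr 1 with j
  simp only [Equiv.subLeft_apply, sub_sub_cancel]
  congr 2
  abel

lemma summable_autocorr (ha₀ : ∀ k, 0 ≤ a k) (ha : Summable a) : Summable (autocorr a) :=
  Summable.prod <| (ha.mul_of_nonneg ha ha₀ ha₀).comp_injective
    (i := fun p : ι × ι => (p.2, p.2 + p.1)) fun p q h => by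
      have h₂ : p.2 = q.2 := (Prod.ext_iff.1 h).1
      have h₁ : p.2 + p.1 = q.2 + q.1 := (Prod.ext_iff.1 h).2
      rw [h₂] at h₁
      exact Prod.ext (add_left_cancel h₁) h₂

end Summability

section Amalgam

lemma one_le_of_submultiplicative {E : Type*} [AddGroup E] {w : E → ℝ} (hw_pos : ∀ x, 0 < w x)
    (hw_symm : ∀ x, w (-x) = w x) (hw_submul : ∀ x y, w (x + y) ≤ w x * w y) (hw0 : w 0 = 1)
    (x : E) : 1 ≤ w x := by
  have h := hw_submul x (-x)
  rw [add_neg_cancel, hw0, hw_symm] at h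
  nlinarith [hw_pos x]

variable {d : ℕ} {H : Type*} [NormedAddCommGroup H] {α : ℝ} {w : (Fin d → ℝ) → ℝ}

lemma tsum_eLpNorm_indicator_cube_le_amalgamNorm (hw : ∀ x, 1 ≤ w x) (h : (Fin d → ℝ) → H) :
    ∑' k, eLpNorm ((cube α k).indicator h) ∞ volume ≤ amalgamNorm α ∞ 1 w h := by
  rw [amalgamNorm, lqNorm, if_neg ENNReal.one_ne_top]
  simp only [ENNReal.toReal_one, ENNReal.rpow_one, div_one]
  exact ENNReal.tsum_le_tsum fun k =>
    le_mul_of_one_le_right zero_le (ENNReal.one_le_ofReal.2 (hw _))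

lemma exists_summable_majorant (hα : 0 < α) (hw : ∀ x, 1 ≤ w x) {h : (Fin d → ℝ) → H}
    (hh : Continuous h) (hW : amalgamNorm α ∞ 1 w h < ∞) :
    ∃ a : (Fin d → ℤ) → ℝ, (∀ k, 0 ≤ a k) ∧ Summable a ∧ ∀ x, ‖h x‖ ≤ a (latticeIndex α x) := by
  have hne : ∑' k, eLpNorm ((cube α k).indicator h) ∞ volume ≠ ∞ :=
    ((tsum_eLpNorm_indicator_cube_le_amalgamNorm hw h).trans_lt hW).ne
  refine ⟨fun k => (eLpNorm ((cube α k).indicator h) ∞ volume).toReal,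
    fun k => ENNReal.toReal_nonneg, ENNReal.summable_toReal hne, fun x => ?_⟩
  rw [← toReal_enorm]
  exact ENNReal.toReal_mono (ne_top_of_le_ne_top hne (ENNReal.le_tsum _))
    (enorm_le_eLpNorm_indicator_cube hh (mem_cube_latticeIndex hα x))

end Amalgam

lemma continuous_tsum_of_locally_bounded {ι E F : Type*} [TopologicalSpace E]
    [NormedAddCommGroup F] [CompleteSpace F] {f : ι → E → F} (hf : ∀ i, Continuous (f i))
    (hfu : ∀ x₀, ∃ U ∈ 𝓝 x₀, ∃ u : ι → ℝ, Summable u ∧ ∀ i, ∀ x ∈ U, ‖f i x‖ ≤ u i) :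
    Continuous fun x => ∑' i, f i x := by
  refine continuous_iff_continuousAt.2 fun x₀ => ?_
  obtain ⟨U, hU, u, hu, hfuU⟩ := hfu x₀
  exact (continuousOn_tsum (fun i => (hf i).continuousOn) hu hfuU).continuousAt hU

section Walnut

variable {d : ℕ} {H : Type*} [NormedAddCommGroup H] [InnerProductSpace ℂ H]

/-- `x ↦ ∑ₖ (T_{αk} g)(x) ⊙ (T_{αk+v} g)(x)`; for `v = n / β` this is the function `G_n`. -/
noncomputable def latticeCorrelation (α : ℝ) (g : (Fin d → ℝ) → H) (v x : Fin d → ℝ) :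
    H →L[ℂ] H :=
  ∑' k : Fin d → ℤ, odot (g (x - fun i => α * k i)) (g (x - (fun i => α * k i) - v))

/-- The sum over `e` covers the two possible values of each coordinate of
`latticeIndex α (x - v) - latticeIndex α x`, which makes the bound independent of `x`. -/
noncomputable def walnutBound (a : (Fin d → ℤ) → ℝ) (α : ℝ) (v : Fin d → ℝ) : ℝ :=
  ∑ e ∈ Fintype.piFinset fun _ => ({0, 1} : Finset ℤ), autocorr a (e - fun i => ⌈v i / α⌉)

variable {α : ℝ} {g : (Fin d → ℝ) → H} {a : (Fin d → ℤ) → ℝ}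

lemma walnutBound_nonneg (ha₀ : ∀ k, 0 ≤ a k) (v : Fin d → ℝ) : 0 ≤ walnutBound a α v :=
  Finset.sum_nonneg fun _ _ => autocorr_nonneg ha₀ _

lemma summable_walnutBound (hα : 0 < α) {β : ℝ} (hβ : 0 < β) (ha₀ : ∀ k, 0 ≤ a k)
    (ha : Summable a) : Summable fun n : Fin d → ℤ => walnutBound a α fun i => n i / β := by
  refine summable_sum fun e _ => ?_
  have hshift : Summable fun q => autocorr a (e - q) :=
    (summable_autocorr ha₀ ha).comp_injective sub_right_injective
  simp_rw [div_div]
  exact summable_comp_of_card_fiber_le (fun q => autocorr_nonneg ha₀ _) hshift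
    (card_filter_ceil_div_eq_le (mul_pos hβ hα))

lemma norm_odot_translate_le (hα : α ≠ 0) (ha₀ : ∀ k, 0 ≤ a k)
    (hga : ∀ x, ‖g x‖ ≤ a (latticeIndex α x)) (v x : Fin d → ℝ) (k : Fin d → ℤ) :
    ‖odot (g (x - fun i => α * k i)) (g (x - (fun i => α * k i) - v))‖ ≤
      a (latticeIndex α x - k) * a (latticeIndex α (x - v) - k) := by
  refine (norm_odot_le _ _).trans (mul_le_mul ?_ ?_ (norm_nonneg _) (ha₀ _))
  · simpa only [latticeIndex_sub_lattice hα] using hga (x - fun i => α * k i)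
  · rw [← latticeIndex_sub_lattice hα, sub_right_comm]
    exact hga _

lemma norm_latticeCorrelation_le (hα : α ≠ 0) (ha₀ : ∀ k, 0 ≤ a k) (ha : Summable a)
    (hga : ∀ x, ‖g x‖ ≤ a (latticeIndex α x)) (v x : Fin d → ℝ) :
    ‖latticeCorrelation α g v x‖ ≤ walnutBound a α v := by
  have hcorr : ‖latticeCorrelation α g v x‖ ≤
      autocorr a (latticeIndex α (x - v) - latticeIndex α x) := by
    rw [← tsum_mul_sub_mul_sub]
    exact tsum_of_norm_bounded (summable_mul_sub_mul_sub ha₀ ha _ _).hasSum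
      (norm_odot_translate_le hα ha₀ hga v x)
  refine hcorr.trans (le_of_eq_of_le ?_ (Finset.single_le_sum
    (fun e _ => autocorr_nonneg ha₀ _) (latticeIndex_sub_sub_add_ceil_mem (α := α) x v)))
  rw [add_sub_cancel_right]

/-- Near `x₀` only the finitely many cubes meeting `ball x₀ 1` contribute to the first factor,
which makes the `k`-series locally uniformly summable. -/
lemma continuous_latticeCorrelation [CompleteSpace H] (hα : 0 < α) (hg : Continuous g)
    (ha₀ : ∀ k, 0 ≤ a k) (ha : Summable a) (hga : ∀ x, ‖g x‖ ≤ a (latticeIndex α x))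
    (v : Fin d → ℝ) : Continuous (latticeCorrelation α g v) := by
  refine continuous_tsum_of_locally_bounded (fun k => continuous_odot.comp
    ((hg.comp (continuous_sub_right _)).prodMk
      (hg.comp ((continuous_sub_right v).comp (continuous_sub_right _)))))
    fun x₀ => ?_
  set F := Fintype.piFinset fun i => Finset.Icc ⌊(x₀ i - 1) / α⌋ ⌊(x₀ i + 1) / α⌋
  refine ⟨Metric.ball x₀ 1, Metric.ball_mem_nhds _ one_pos,
    fun k => (∑ m ∈ F, a (m - k)) * ∑' j, a j,
    (summable_sum fun m _ => ha.comp_injective sub_right_injective).mul_right _,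
    fun k x hx => (norm_odot_translate_le hα.ne' ha₀ hga v x k).trans ?_⟩
  refine mul_le_mul ?_ (ha.le_tsum _ fun j _ => ha₀ j) (ha₀ _)
    (Finset.sum_nonneg fun _ _ => ha₀ _)
  exact Finset.single_le_sum (f := fun m => a (m - k)) (fun _ _ => ha₀ _)
    (latticeIndex_mem_of_mem_ball hα hx)

end Walnut

theorem frame_operator_preserves_continuity_general {d : ℕ} {H : Type*} [NormedAddCommGroup H]
    [InnerProductSpace ℂ H] [CompleteSpace H]
    (α β : ℝ) (hα : 0 < α) (hβ : 0 < β)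
    (w : (Fin d → ℝ) → ℝ)
    (hw_pos : ∀ x, 0 < w x) (hw_symm : ∀ x, w (-x) = w x)
    (hw_submul : ∀ x y, w (x + y) ≤ w x * w y) (hw0 : w 0 = 1)
    (g : (Fin d → ℝ) → H) (hgc : Continuous g) (hgW : amalgamNorm α ∞ 1 w g < ∞)
    (f : (Fin d → ℝ) → H) (hfc : Continuous f) (hfW : amalgamNorm α ∞ 1 w f < ∞) :
    Continuous (fun x : Fin d → ℝ => (β ^ d : ℝ)⁻¹ •
        ∑' n : Fin d → ℤ,
          (∑' k : Fin d → ℤ,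
            odot (g (x - fun i => α * k i)) (g (x - (fun i => α * k i) - fun i => n i / β)))
            (f (x - fun i => n i / β))) ∧
      TendstoUniformly
        (fun (s : Finset (Fin d → ℤ)) (x : Fin d → ℝ) =>
          ∑ n ∈ s,
            (∑' k : Fin d → ℤ,
              odot (g (x - fun i => α * k i)) (g (x - (fun i => α * k i) - fun i => n i / β)))
              (f (x - fun i => n i / β)))
        (fun x : Fin d → ℝ =>
          ∑' n : Fin d → ℤ,
            (∑' k : Fin d → ℤ,
              odot (g (x - fun i => α * k i)) (g (x - (fun i => α * k i) - fun i => n i / β)))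
              (f (x - fun i => n i / β)))
        Filter.atTop := by
  have hw : ∀ x, 1 ≤ w x := one_le_of_submultiplicative hw_pos hw_symm hw_submul hw0
  obtain ⟨a, ha₀, ha, hga⟩ := exists_summable_majorant hα hw hgc hgW
  obtain ⟨b, hb₀, hb, hfb⟩ := exists_summable_majorant hα hw hfc hfW
  have hf_le : ∀ y, ‖f y‖ ≤ ∑' k, b k := fun y => (hfb y).trans (hb.le_tsum _ fun k _ => hb₀ k)
  have hterm_le : ∀ (n : Fin d → ℤ) x,
      ‖latticeCorrelation α g (fun i => n i / β) x (f (x - fun i => n i / β))‖ ≤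
        walnutBound a α (fun i => n i / β) * ∑' k, b k := fun n x =>
    ((latticeCorrelation α g _ x).le_opNorm _).trans <| mul_le_mul
      (norm_latticeCorrelation_le hα.ne' ha₀ ha hga _ x) (hf_le _) (norm_nonneg _)
      (walnutBound_nonneg ha₀ _)
  have hterm_cont : ∀ n : Fin d → ℤ, Continuous fun x =>
      latticeCorrelation α g (fun i => n i / β) x (f (x - fun i => n i / β)) := fun n =>
    (continuous_latticeCorrelation hα hgc ha₀ ha hga _).clm_apply
      (hfc.comp (continuous_sub_right _))
  have hM := (summable_walnutBound hα hβ ha₀ ha).mul_right (∑' k, b k)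
  exact ⟨(continuous_tsum hterm_cont hM hterm_le).const_smul _, tendstoUniformly_tsum hM hterm_le⟩

/-- Let `g ∈ W_H(C₀, L^1_w)` be a continuous window generating a Gabor frame `G(g,α,β)` for
`L²(ℝ^d,H)`. Then the frame operator `S_g` maps `W_H(C₀, L^1_w)` into itself: if
`f ∈ W_H(L^∞, L^1_w)` is continuous, then `S_g f = β^{-d} Σ_n G_n(T_{n/β} f)` is continuous,
where `G_n(x) = Σ_k (T_{αk}g)(x) ⊙ (T_{αk+n/β}g)(x)`; moreover the series
`Σ_n G_n(T_{n/β} f)` converges uniformly on `ℝ^d`. -/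
theorem frame_operator_preserves_continuity {d : ℕ} {H : Type*} [NormedAddCommGroup H]
    [InnerProductSpace ℂ H] [CompleteSpace H]
    (α β : ℝ) (hα : 0 < α) (hβ : 0 < β)
    (w : (Fin d → ℝ) → ℝ)
    (hw_cont : Continuous w) (hw_pos : ∀ x, 0 < w x) (hw_symm : ∀ x, w (-x) = w x)
    (hw_submul : ∀ x y, w (x + y) ≤ w x * w y) (hw0 : w 0 = 1)
    (g : (Fin d → ℝ) → H) (hgc : Continuous g) (hgW : amalgamNorm α ∞ 1 w g < ∞)
    (hframe : ∃ A B : ℝ, 0 < A ∧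
      ∀ f : (Fin d → ℝ) → H, MemLp f 2 volume →
        (A * ∫ x, ‖f x‖ ^ 2) ≤
            (∑' kn : (Fin d → ℤ) × (Fin d → ℤ),
              ‖∫ x, (inner ℂ (tfShift α β g kn.1 kn.2 x) (f x) : ℂ)‖ ^ 2) ∧
          (∑' kn : (Fin d → ℤ) × (Fin d → ℤ),
              ‖∫ x, (inner ℂ (tfShift α β g kn.1 kn.2 x) (f x) : ℂ)‖ ^ 2) ≤ B * ∫ x, ‖f x‖ ^ 2)
    (f : (Fin d → ℝ) → H) (hfc : Continuous f) (hfW : amalgamNorm α ∞ 1 w f < ∞) :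
    Continuous (fun x : Fin d → ℝ => (β ^ d : ℝ)⁻¹ •
        ∑' n : Fin d → ℤ,
          (∑' k : Fin d → ℤ,
            odot (g (x - fun i => α * k i)) (g (x - (fun i => α * k i) - fun i => n i / β)))
            (f (x - fun i => n i / β))) ∧
      TendstoUniformly
        (fun (s : Finset (Fin d → ℤ)) (x : Fin d → ℝ) =>
          ∑ n ∈ s,
            (∑' k : Fin d → ℤ,
              odot (g (x - fun i => α * k i)) (g (x - (fun i => α * k i) - fun i => n i / β)))
              (f (x - fun i => n i / β)))
        (fun x : Fin d → ℝ =>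
          ∑' n : Fin d → ℤ,
            (∑' k : Fin d → ℤ,
              odot (g (x - fun i => α * k i)) (g (x - (fun i => α * k i) - fun i => n i / β)))
              (f (x - fun i => n i / β)))
        Filter.atTop :=
  frame_operator_preserves_continuity_general α β hα hβ w hw_pos hw_symm hw_submul hw0 g hgc hgW f
    hfc hfW
end
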